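/- arXiv:1912.10989 — 3 statements merged into one kernel-verified Lean document; each statement's English description precedes it below -/
import Mathlib

section
/- If a finite simple graph G has an edge clique cover of size cc, then the number of minimal separators of G is at most 2^cc. -/
open scoped Classical

namespace PaperECC

variable {V : Type*}

/-- `nbhd G X` is N(X): vertices outside `X` with a neighbor in `X`. -/
def nbhd (G : SimpleGraph V) (X : Set V) : Set V :=
  {v | v ∉ X ∧ ∃ u ∈ X, G.Adj u v}

/-- `closedNbhd G X` is N[X] = X ∪ N(X). -/
def closedNbhd (G : SimpleGraph V) (X : Set V) : Set V :=
  X ∪ nbhd G X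

/-- closed neighborhood N[v] of a single vertex. -/
def vNbhd (G : SimpleGraph V) (v : V) : Set V :=
  insert v (G.neighborSet v)

/-- `IsCompOf G X C`: `C` is the vertex set of a connected component of `G \ X`. -/
def IsCompOf (G : SimpleGraph V) (X C : Set V) : Prop :=
  C.Nonempty ∧ Disjoint C X ∧ (G.induce C).Connected ∧
    ∀ u ∈ C, ∀ v, v ∉ X → G.Adj u v → v ∈ C

/-- `C` is a full component of `X`: a component of `G \ X` with N(C) = X. -/
def IsFullCompOf (G : SimpleGraph V) (X C : Set V) : Prop :=
  IsCompOf G X C ∧ nbhd G C = X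

/-- `S` is a minimal separator of `G`: it has at least two full components. -/
def IsMinSep (G : SimpleGraph V) (S : Set V) : Prop :=
  ∃ C D : Set V, C ≠ D ∧ IsFullCompOf G S C ∧ IsFullCompOf G S D

/-- `C` is a block of `G`: a component of `G \ N(C)` whose neighborhood is a minimal separator. -/
def IsBlock (G : SimpleGraph V) (C : Set V) : Prop :=
  IsCompOf G (nbhd G C) C ∧ IsMinSep G (nbhd G C)

/-- `H` is chordal: every (injectively embedded) cycle on at least 4 vertices has a chord,
i.e. there is no induced cycle on four or more vertices. -/
def IsChordal (H : SimpleGraph V) : Prop :=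
  ∀ n : ℕ, 4 ≤ n → ∀ f : ZMod n → V, Function.Injective f →
    (∀ i, H.Adj (f i) (f (i + 1))) →
    ∃ i j : ZMod n, i ≠ j ∧ j ≠ i + 1 ∧ i ≠ j + 1 ∧ H.Adj (f i) (f j)

/-- `H` is a triangulation of `G` (on the same vertex set). -/
def IsTri (G H : SimpleGraph V) : Prop :=
  IsChordal H ∧ G ≤ H

/-- `H` is a minimal triangulation of `G`. -/
def IsMinTri (G H : SimpleGraph V) : Prop :=
  IsTri G H ∧ ∀ H' : SimpleGraph V, IsTri G H' → H' ≤ H → H' = H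

/-- `Ω` is a maximal clique of `H`. -/
def IsMaxClique (H : SimpleGraph V) (Ω : Set V) : Prop :=
  H.IsClique Ω ∧ ∀ Ω' : Set V, H.IsClique Ω' → Ω ⊆ Ω' → Ω' = Ω

/-- `Ω` is a potential maximal clique of `G`: a maximal clique of some minimal triangulation. -/
def IsPMC (G : SimpleGraph V) (Ω : Set V) : Prop :=
  ∃ H : SimpleGraph V, IsMinTri G H ∧ IsMaxClique H Ω

/-- `W` is an edge clique cover of `G`: a finite collection of cliques covering all edges. -/
def IsECC (G : SimpleGraph V) (W : Finset (Set V)) : Prop :=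
  (∀ K ∈ W, G.IsClique K) ∧ ∀ u v : V, G.Adj u v → ∃ K ∈ W, u ∈ K ∧ v ∈ K

/-- `W[X]`: the cliques of `W` intersecting the vertex set `X`. -/
noncomputable def meeting (W : Finset (Set V)) (X : Set V) : Finset (Set V) :=
  W.filter (fun K => (K ∩ X).Nonempty)

/-- `V(G, W')`: the vertices all of whose cliques (within `W`) belong to `W'`. -/
def partVerts (W W' : Finset (Set V)) : Set V :=
  {v | ∀ K ∈ W, v ∈ K → K ∈ W'}

/-- The connected components of the subgraph of `G` induced on a vertex set `Y`. -/
def compsOf (G : SimpleGraph V) (Y : Set V) : Set (Set V) :=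
  {C | IsCompOf G Yᶜ C}

/-- `C(W')`: the components of the part `W'` of the edge clique cover `W`. -/
def partComps (G : SimpleGraph V) (W W' : Finset (Set V)) : Set (Set V) :=
  compsOf G (partVerts W W')

/-- `W'` is a good part of `W`: a nonempty subset all of whose components are blocks of `G`. -/
def IsGoodPart (G : SimpleGraph V) (W W' : Finset (Set V)) : Prop :=
  W' ⊆ W ∧ W'.Nonempty ∧ ∀ C ∈ partComps G W W', IsBlock G C

/-- The realization `R(C)` of a block `C`, as a graph supported on `N[C]`:
edges of `G[N[C]]` together with all pairs inside `N(C)`. -/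
def realization (G : SimpleGraph V) (C : Set V) : SimpleGraph V where
  Adj u v := u ≠ v ∧ u ∈ closedNbhd G C ∧ v ∈ closedNbhd G C ∧
    (G.Adj u v ∨ (u ∈ nbhd G C ∧ v ∈ nbhd G C))
  symm := by
    constructor
    intro u v h
    exact ⟨h.1.symm, h.2.2.1, h.2.1, h.2.2.2.elim (fun a => Or.inl a.symm)
      (fun a => Or.inr ⟨a.2, a.1⟩)⟩
  loopless := ⟨fun u h => h.1 rfl⟩

/-- The complete graph on the vertex set `Ω` (supported on `Ω`): all pairs inside `Ω`. -/
def cliqueOn (Ω : Set V) : SimpleGraph V where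
  Adj u v := u ≠ v ∧ u ∈ Ω ∧ v ∈ Ω
  symm := ⟨fun u v h => ⟨h.1.symm, h.2.2, h.2.1⟩⟩
  loopless := ⟨fun u h => h.1 rfl⟩

/-- The induced subgraph `G[A]`, as a graph supported on `A`. -/
def inducedOn (G : SimpleGraph V) (A : Set V) : SimpleGraph V where
  Adj u v := G.Adj u v ∧ u ∈ A ∧ v ∈ A
  symm := ⟨fun u v h => ⟨h.1.symm, h.2.2, h.2.1⟩⟩
  loopless := ⟨fun u h => G.loopless.1 u h.1⟩

/-- All edges of `H` lie inside the vertex set `A` (i.e. `H` has vertex set `A`). -/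
def edgesWithin (H : SimpleGraph V) (A : Set V) : Prop :=
  ∀ u v : V, H.Adj u v → u ∈ A ∧ v ∈ A

/-- `H` is a triangulation of the graph `G'` with vertex set `A`. -/
def IsTriOn (G' : SimpleGraph V) (A : Set V) (H : SimpleGraph V) : Prop :=
  IsChordal H ∧ G' ≤ H ∧ edgesWithin H A

/-- `H` is a minimal triangulation of the graph `G'` with vertex set `A`. -/
def IsMinTriOn (G' : SimpleGraph V) (A : Set V) (H : SimpleGraph V) : Prop :=
  IsTriOn G' A H ∧ ∀ H' : SimpleGraph V, IsTriOn G' A H' → H' ≤ H → H' = H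

/-- `M` is a module of `G`. -/
def IsModule (G : SimpleGraph V) (M : Set V) : Prop :=
  ∀ v ∉ M, (∀ u ∈ M, G.Adj v u) ∨ (∀ u ∈ M, ¬ G.Adj v u)

/-!
Let `S` be a minimal separator with full components `C ≠ D`, and let `T` be the union of the
cliques of `W` meeting `C`. As these are cliques covering the edges, `S = N(C) ⊆ T ⊆ C ∪ S`.
Moreover `S` is exactly the set of vertices of `T` with a neighbour outside `T`: every neighbour of a
vertex of `C` shares a clique with it and so lies in `T`, while every vertex of `S` has a
neighbour in `D`, which is disjoint from `C ∪ S`. Hence `S = N(Tᶜ)` is determined by a subfamily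
of `W`, so there are at most `2 ^ |W|` minimal separators.
-/

lemma IsCompOf.subset_of_mem {G : SimpleGraph V} {S C D : Set V}
    (hC : IsCompOf G S C) (hD : IsCompOf G S D) {x : V} (hxC : x ∈ C) (hxD : x ∈ D) :
    C ⊆ D := by
  intro u hu
  obtain ⟨p⟩ := hC.2.2.1.preconnected ⟨x, hxC⟩ ⟨u, hu⟩
  have walk_mem : ∀ {a b : C}, (G.induce C).Walk a b → (a : V) ∈ D → (b : V) ∈ D := by
    intro a b q
    induction q with
    | nil => exact id
    | cons hadj _ ih =>
      exact fun ha => ih (hD.2.2.2 _ ha _ (Set.disjoint_left.mp hC.2.1 (Subtype.prop _)) hadj)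
  exact walk_mem p hxD

lemma IsCompOf.disjoint_of_ne {G : SimpleGraph V} {S C D : Set V}
    (hC : IsCompOf G S C) (hD : IsCompOf G S D) (hne : C ≠ D) : Disjoint C D :=
  Set.disjoint_left.mpr fun _ hxC hxD =>
    hne ((hC.subset_of_mem hD hxC hxD).antisymm (hD.subset_of_mem hC hxD hxC))

lemma mem_sUnion_meeting {W : Finset (Set V)} {C : Set V} {v : V} :
    v ∈ ⋃₀ (meeting W C : Set (Set V)) ↔ ∃ K ∈ W, (K ∩ C).Nonempty ∧ v ∈ K := by
  simp only [Set.mem_sUnion, Finset.mem_coe, meeting, Finset.mem_filter, and_assoc]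

section EdgeCliqueCover

variable {G : SimpleGraph V} {W : Finset (Set V)}

lemma IsECC.mem_sUnion_meeting_of_adj (hW : IsECC G W) {C : Set V} {u w : V} (hu : u ∈ C)
    (hadj : G.Adj u w) : w ∈ ⋃₀ (meeting W C : Set (Set V)) := by
  obtain ⟨K, hKW, huK, hwK⟩ := hW.2 u w hadj
  exact mem_sUnion_meeting.mpr ⟨K, hKW, ⟨u, huK, hu⟩, hwK⟩

lemma IsECC.nbhd_subset_sUnion_meeting (hW : IsECC G W) (C : Set V) :
    nbhd G C ⊆ ⋃₀ (meeting W C : Set (Set V)) := by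
  rintro v ⟨-, u, hu, hadj⟩
  exact hW.mem_sUnion_meeting_of_adj hu hadj

lemma IsECC.sUnion_meeting_subset_closedNbhd (hW : IsECC G W) (C : Set V) :
    ⋃₀ (meeting W C : Set (Set V)) ⊆ closedNbhd G C := by
  intro v hv
  obtain ⟨K, hKW, ⟨u, huK, huC⟩, hvK⟩ := mem_sUnion_meeting.mp hv
  by_cases hvC : v ∈ C
  · exact Or.inl hvC
  · exact Or.inr ⟨hvC, u, huC, hW.1 K hKW huK hvK (ne_of_mem_of_not_mem huC hvC)⟩

lemma IsECC.nbhd_compl_sUnion_meeting (hW : IsECC G W) {S C D : Set V}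
    (hC : IsFullCompOf G S C) (hD : IsFullCompOf G S D) (hne : C ≠ D) :
    nbhd G (⋃₀ (meeting W C : Set (Set V)))ᶜ = S := by
  set T := ⋃₀ (meeting W C : Set (Set V))
  have hST : S ⊆ T := hC.2 ▸ hW.nbhd_subset_sUnion_meeting C
  have hTCS : T ⊆ C ∪ S := hC.2 ▸ hW.sUnion_meeting_subset_closedNbhd C
  ext v
  constructor
  · rintro ⟨hvT, w, hwT, hadj⟩
    refine (hTCS (not_not.mp hvT)).resolve_left fun hvC => hwT ?_
    exact hW.mem_sUnion_meeting_of_adj hvC hadj.symm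
  · intro hvS
    obtain ⟨-, u, huD, hadj⟩ : v ∈ nbhd G D := hD.2 ▸ hvS
    refine ⟨not_not.mpr (hST hvS), u, fun huT => ?_, hadj⟩
    rcases hTCS huT with huC | huS
    · exact Set.disjoint_left.mp (hC.1.disjoint_of_ne hD.1 hne) huC huD
    · exact Set.disjoint_left.mp hD.1.2.1 huD huS

end EdgeCliqueCover

theorem num_minimal_separators_le_general {V : Type*} (G : SimpleGraph V)
    (cc : ℕ) (W : Finset (Set V)) (hW : IsECC G W) (hcard : W.card = cc) :
    {S : Set V | IsMinSep G S}.ncard ≤ 2 ^ cc := by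
  have hsub : {S : Set V | IsMinSep G S} ⊆
      (fun W' : Finset (Set V) => nbhd G (⋃₀ (W' : Set (Set V)))ᶜ) '' W.powerset := by
    rintro S ⟨C, D, hne, hC, hD⟩
    exact ⟨meeting W C, Finset.mem_powerset.mpr (Finset.filter_subset _ _),
      hW.nbhd_compl_sUnion_meeting hC hD hne⟩
  calc {S : Set V | IsMinSep G S}.ncard
      ≤ (W.powerset : Set (Finset (Set V))).ncard :=
        (Set.ncard_le_ncard hsub (Set.toFinite _)).trans (Set.ncard_image_le (Set.toFinite _))
    _ = 2 ^ cc := by rw [Set.ncard_coe_finset, Finset.card_powerset, hcard]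

/-- If a finite simple graph `G` has an edge clique cover of size `cc`,
then the number of minimal separators of `G` is at most `2 ^ cc`. -/
theorem num_minimal_separators_le {V : Type*} [Fintype V] (G : SimpleGraph V)
    (cc : ℕ) (W : Finset (Set V)) (hW : IsECC G W) (hcard : W.card = cc) :
    {S : Set V | IsMinSep G S}.ncard ≤ 2 ^ cc :=
  num_minimal_separators_le_general G cc W hW hcard

end PaperECC
end

section
/- Let G be a finite connected simple graph with an edge clique cover W. Then every minimal triangulation H of G has a maximal clique Ω such that every connected component C of G \ Ω satisfies |W[C]| ≤ |W|/2, where W[C] is the set of cliques of W intersecting C. -/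
/-!
Since `G ≤ H`, the cliques of `W` are cliques of `H` and every component of `G \ Ω` lies in a
component of `H \ Ω`, so it suffices to find a maximal clique of the chordal graph `H` none of
whose `H`-components `D` is heavy, i.e. has `2 |W[D]| > |W|`. If there is none, pick a maximal
clique `Ω` with a heavy component `D` that is inclusion-minimal among all such components. By
Dirac's lemma some `x ∈ D` is adjacent to the whole clique `N(D) ⊆ Ω`; extend `N(D) ∪ {x}` to a
maximal clique `Ω'`. A component of `H \ Ω'` meeting `D` lies in `D \ {x}`, so it is not heavy by
minimality; one missing `D` also misses `N[D]`, so no clique of `W` meets both it and `D`, and the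
two cannot both be heavy.

Dirac's lemma is proved one vertex `t` of the clique at a time, following a shortest path from a
vertex of `D` to `t` through `D`: a vertex adjacent to both ends of a chordless path of length at
least two is adjacent to an interior vertex, since otherwise it closes a chordless cycle.
-/

open scoped Classical

namespace PaperECC

variable {V : Type*}

open SimpleGraph

structure IsChordlessPath (H : SimpleGraph V) (q : ℕ → V) (k : ℕ) : Prop where
  injOn : Set.InjOn q (Set.Iic k)
  adj : ∀ i < k, H.Adj (q i) (q (i + 1))
  not_adj : ∀ i j, i + 1 < j → j ≤ k → ¬ H.Adj (q i) (q j)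

namespace IsChordlessPath

variable {H : SimpleGraph V} {q : ℕ → V} {k : ℕ}

lemma shift (hq : IsChordlessPath H q k) {a : ℕ} (ha : a ≤ k) :
    IsChordlessPath H (fun i => q (a + i)) (k - a) where
  injOn i hi j hj h := by
    simp only [Set.mem_Iic] at hi hj
    have := hq.injOn (show a + i ∈ Set.Iic k by simp; omega)
      (show a + j ∈ Set.Iic k by simp; omega) h
    omega
  adj i hi := hq.adj (a + i) (by omega)
  not_adj i j hij hj := hq.not_adj (a + i) (a + j) (by omega) (by omega)

lemma map {U : Type*} {K : SimpleGraph U} (hq : IsChordlessPath H q k) (f : H ↪g K) :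
    IsChordlessPath K (f ∘ q) k where
  injOn := f.injective.comp_injOn hq.injOn
  adj i hi := f.map_adj_iff.mpr (hq.adj i hi)
  not_adj i j hij hj := by
    simpa only [Function.comp, f.map_adj_iff] using hq.not_adj i j hij hj

end IsChordlessPath

lemma isChordlessPath_getVert {U : Type*} {K : SimpleGraph U} {u w : U} (p : K.Walk u w)
    (hp : p.length = K.dist u w) : IsChordlessPath K p.getVert p.length where
  injOn := (p.isPath_of_length_eq_dist hp).getVert_injOn
  adj i hi := p.adj_getVert_succ hi
  not_adj i j hij hj hadj := by
    have := dist_le ((p.take i).append (.cons hadj (p.drop j)))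
    simp only [Walk.length_append, Walk.length_cons, Walk.take_length, Walk.drop_length] at this
    omega

section Chordal

variable {H : SimpleGraph V}

lemma IsChordal.exists_chord (hH : IsChordal H) {n : ℕ} (hn : 4 ≤ n) {g : ℕ → V}
    (hinj : Set.InjOn g (Set.Iio n)) (hadj : ∀ i, i + 1 < n → H.Adj (g i) (g (i + 1)))
    (hclose : H.Adj (g (n - 1)) (g 0)) :
    ∃ i j, i + 1 < j ∧ j < n ∧ ¬ (i = 0 ∧ j = n - 1) ∧ H.Adj (g i) (g j) := by
  have : NeZero n := ⟨by omega⟩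
  have hsucc (z : ZMod n) : (z + 1).val = if z.val + 1 = n then 0 else z.val + 1 := by
    rw [ZMod.val_add, ZMod.val_one_eq_one_mod, Nat.mod_eq_of_lt (by omega : 1 < n)]
    have := z.val_lt
    split_ifs with h
    · rw [h, Nat.mod_self]
    · exact Nat.mod_eq_of_lt (by omega)
  obtain ⟨i, j, hij, hji, hij', hchord⟩ := hH n hn (g ∘ ZMod.val)
    (fun a b h => ZMod.val_injective n (hinj a.val_lt b.val_lt h))
    (fun z => by
      have := z.val_lt
      simp only [Function.comp, hsucc]
      split_ifs with h
      · simpa [show z.val = n - 1 by omega] using hclose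
      · exact hadj _ (by omega))
  have hval {a b : ZMod n} (h : a ≠ b + 1) : a.val ≠ if b.val + 1 = n then 0 else b.val + 1 :=
    fun h' => h (ZMod.val_injective n (h'.trans (hsucc b).symm))
  have hne : i.val ≠ j.val := fun h => hij (ZMod.val_injective n h)
  have h1 := hval hji
  have h2 := hval hij'
  have := i.val_lt
  have := j.val_lt
  rcases Nat.lt_or_gt_of_ne hne with hlt | hlt
  · exact ⟨i.val, j.val, by split_ifs at h1 <;> omega, j.val_lt,
      by split_ifs at h2 <;> omega, hchord⟩
  · exact ⟨j.val, i.val, by split_ifs at h2 <;> omega, i.val_lt,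
      by split_ifs at h1 <;> omega, hchord.symm⟩

lemma IsChordal.exists_adj_interior_of_adj_ends (hH : IsChordal H) {q : ℕ → V} {m : ℕ}
    (hq : IsChordlessPath H q m) (hm : 2 ≤ m) {s : V} (hs : ∀ i ≤ m, q i ≠ s)
    (h0 : H.Adj s (q 0)) (hm' : H.Adj s (q m)) : ∃ j, 0 < j ∧ j < m ∧ H.Adj s (q j) := by
  by_contra! hno
  set g : ℕ → V := fun i => if i ≤ m then q i else s
  have hg {i : ℕ} (hi : i ≤ m) : g i = q i := if_pos hi
  have hgs : g (m + 1) = s := if_neg (by omega)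
  have hinj : Set.InjOn g (Set.Iio (m + 2)) := by
    intro i hi j hj h
    simp only [Set.mem_Iio] at hi hj
    rcases Nat.lt_or_ge m i with hi' | hi' <;> rcases Nat.lt_or_ge m j with hj' | hj'
    · omega
    · exact absurd (by rwa [hg hj', show i = m + 1 by omega, hgs, eq_comm] at h) (hs j hj')
    · exact absurd (by rwa [hg hi', show j = m + 1 by omega, hgs] at h) (hs i hi')
    · exact hq.injOn (Set.mem_Iic.mpr hi') (Set.mem_Iic.mpr hj') (by rwa [hg hi', hg hj'] at h)
  have hadj (i : ℕ) (hi : i + 1 < m + 2) : H.Adj (g i) (g (i + 1)) := by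
    rcases Nat.lt_or_ge i m with hi' | hi'
    · rw [hg hi'.le, hg hi']
      exact hq.adj i hi'
    · rw [hg (by omega), show i = m by omega, hgs]
      exact hm'.symm
  obtain ⟨i, j, hij, hj, hij0, hchord⟩ :=
    hH.exists_chord (by omega) hinj hadj
      (by rwa [show m + 2 - 1 = m + 1 by omega, hgs, hg (Nat.zero_le _)])
  rw [hg (by omega)] at hchord
  rcases Nat.lt_or_ge j (m + 1) with hj' | hj'
  · exact hq.not_adj i j hij (by omega) (by rwa [hg (by omega)] at hchord)
  · rw [show j = m + 1 by omega, hgs] at hchord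
    exact hno i (by omega) (by omega) hchord.symm

lemma IsChordal.adj_penultimate_of_adj_ends (hH : IsChordal H) {q : ℕ → V} {k : ℕ}
    (hq : IsChordlessPath H q k) {s : V} (hs : ∀ i ≤ k, q i ≠ s)
    (h0 : H.Adj s (q 0)) (hk : H.Adj s (q k)) : H.Adj s (q (k - 1)) := by
  set a := Nat.findGreatest (fun i => H.Adj s (q i)) (k - 1)
  have ha : H.Adj s (q a) := Nat.findGreatest_spec (P := fun i => H.Adj s (q i)) (Nat.zero_le _) h0
  rcases (Nat.findGreatest_le (k - 1) : a ≤ k - 1).eq_or_lt with h | h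
  · rwa [← h]
  obtain ⟨j, hj0, hjk, hj⟩ := hH.exists_adj_interior_of_adj_ends (hq.shift (a := a) (by omega))
    (by omega) (fun i hi => hs _ (by omega)) ha (by rwa [Nat.add_sub_cancel' (by omega)])
  exact absurd hj (Nat.findGreatest_is_greatest (by omega : a < a + j) (by omega))

lemma IsChordal.exists_adj_forall_adj (hH : IsChordal H) {D : Set V}
    (hD : (H.induce D).Connected) {t c v : V} (ht : t ∉ D) (hc : c ∈ D) (hct : H.Adj c t)
    (hv : v ∈ D) : ∃ w ∈ D, H.Adj w t ∧ ∀ s ∉ D, H.Adj s v → H.Adj s t → H.Adj s w := by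
  have hconn : (H.induce (D ∪ {t})).Connected :=
    connected_induce_union hD.preconnected Preconnected.of_subsingleton hc rfl hct
  obtain ⟨p, hp⟩ :=
    (hconn.preconnected ⟨v, Or.inl hv⟩ ⟨t, Or.inr rfl⟩).exists_walk_length_eq_dist
  have hq := (isChordlessPath_getVert p hp).map (Embedding.induce _)
  set q := (Embedding.induce (G := H) (D ∪ {t})) ∘ p.getVert
  have hq0 : q 0 = v := by simp [q]
  have hqk : q p.length = t := by simp [q]
  have hlen : p.length ≠ 0 := fun h => ht (by rwa [← hqk, h, hq0])
  have hqD (i : ℕ) (hi : i < p.length) : q i ∈ D := by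
    refine (p.getVert i).prop.resolve_right fun h => ?_
    have := hq.injOn (show i ∈ Set.Iic p.length by simp; omega) (by simp)
      (h.trans hqk.symm)
    omega
  refine ⟨q (p.length - 1), hqD _ (by omega), ?_, fun s hs hsv hst => ?_⟩
  · simpa [Nat.sub_add_cancel (Nat.one_le_iff_ne_zero.mpr hlen), hqk]
      using hq.adj (p.length - 1) (by omega)
  · refine hH.adj_penultimate_of_adj_ends hq (fun i hi h => ?_) (by rwa [hq0]) (by rwa [hqk])
    rcases (p.getVert i).prop with h' | h'
    · exact hs (h ▸ h')
    · exact hst.ne (h.symm.trans h')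

lemma IsChordal.exists_adj_of_isClique (hH : IsChordal H) {D : Set V}
    (hD : (H.induce D).Connected) {S : Set V} (hS : S.Finite) (hSc : H.IsClique S)
    (hSD : Disjoint S D) (hnb : ∀ s ∈ S, ∃ c ∈ D, H.Adj c s) : ∃ x ∈ D, ∀ s ∈ S, H.Adj s x := by
  induction S, hS using Set.Finite.induction_on with
  | empty =>
    obtain ⟨⟨v, hv⟩⟩ := hD.nonempty
    exact ⟨v, hv, by simp⟩
  | @insert t S₀ htS₀ _ ih =>
    obtain ⟨v, hv, hvS₀⟩ := ih (hSc.subset (Set.subset_insert _ _))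
      (hSD.mono_left (Set.subset_insert _ _)) fun s hs => hnb s (Or.inr hs)
    obtain ⟨c, hc, hct⟩ := hnb t (Set.mem_insert _ _)
    obtain ⟨w, hw, hwt, hws⟩ := hH.exists_adj_forall_adj hD
      (Set.disjoint_left.mp hSD (Set.mem_insert _ _)) hc hct hv
    refine ⟨w, hw, ?_⟩
    rintro s (rfl | hs)
    · exact hwt.symm
    · exact hws s (Set.disjoint_left.mp hSD (Or.inr hs)) (hvS₀ s hs)
        (hSc (Or.inr hs) (Or.inl rfl) fun h => htS₀ (h ▸ hs))

end Chordal

section Components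

variable {H : SimpleGraph V} {X D : Set V}

lemma IsCompOf.nbhd_subset (hD : IsCompOf H X D) : nbhd H D ⊆ X :=
  fun v ⟨hvD, u, hu, huv⟩ => by_contra fun hvX => hvD (hD.2.2.2 u hu v hvX huv)

lemma IsCompOf.isCompOf_nbhd (hD : IsCompOf H X D) : IsCompOf H (nbhd H D) D :=
  ⟨hD.1, Set.disjoint_left.mpr fun _ hv h => h.1 hv, hD.2.2.1,
    fun u hu _ hv huv => by_contra fun h => hv ⟨h, u, hu, huv⟩⟩

lemma IsCompOf.subset_of_connected (hD : IsCompOf H X D) {C : Set V}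
    (hC : (H.induce C).Connected) (hCX : Disjoint C X) (hCD : (C ∩ D).Nonempty) : C ⊆ D := by
  have hwalk (a b : C) (p : (H.induce C).Walk a b) : a.1 ∈ D → b.1 ∈ D := by
    induction p with
    | nil => exact id
    | cons hadj _ ih =>
      exact fun ha => ih (hD.2.2.2 _ ha _ (Set.disjoint_left.mp hCX (Subtype.prop _)) hadj)
  obtain ⟨v, hvC, hvD⟩ := hCD
  exact fun u hu => hwalk _ _ (hC.preconnected ⟨v, hvC⟩ ⟨u, hu⟩).some hvD

lemma exists_isCompOf_mem [Finite V] (H : SimpleGraph V) {v : V} (hv : v ∉ X) :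
    ∃ C, IsCompOf H X C ∧ v ∈ C := by
  have hsingleton : (H.induce {v}).Connected := ⟨Preconnected.of_subsingleton⟩
  obtain ⟨C, ⟨hvC, hCX, hC⟩, hmax⟩ :=
    (Set.toFinite {C : Set V | v ∈ C ∧ Disjoint C X ∧ (H.induce C).Connected}).exists_maximal
      ⟨{v}, rfl, Set.disjoint_singleton_left.mpr hv, hsingleton⟩
  refine ⟨C, ⟨⟨v, hvC⟩, hCX, hC, fun u hu w hw huw => ?_⟩, hvC⟩
  have hext : C ∪ {w} ∈ {C : Set V | v ∈ C ∧ Disjoint C X ∧ (H.induce C).Connected} :=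
    ⟨Or.inl hvC, Set.disjoint_union_left.mpr ⟨hCX, Set.disjoint_singleton_left.mpr hw⟩,
      connected_induce_union hC.preconnected Preconnected.of_subsingleton hu rfl huw⟩
  exact hmax hext Set.subset_union_left (Or.inr rfl)

end Components

lemma exists_isMaxClique_superset [Finite V] (H : SimpleGraph V) {K : Set V}
    (hK : H.IsClique K) : ∃ Ω, K ⊆ Ω ∧ IsMaxClique H Ω := by
  obtain ⟨Ω, ⟨hΩ, hKΩ⟩, hmax⟩ :=
    (Set.toFinite {Ω : Set V | H.IsClique Ω ∧ K ⊆ Ω}).exists_maximal ⟨K, hK, subset_rfl⟩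
  exact ⟨Ω, hKΩ, hΩ, fun Ω' hΩ' hsub => (hmax ⟨hΩ', hKΩ.trans hsub⟩ hsub).antisymm hsub⟩

lemma meeting_mono (W : Finset (Set V)) {C D : Set V} (h : C ⊆ D) :
    meeting W C ⊆ meeting W D :=
  Finset.monotone_filter_right _ fun _ _ hK => hK.mono (Set.inter_subset_inter_right _ h)

lemma disjoint_meeting_of_disjoint_closedNbhd {H : SimpleGraph V} {W : Finset (Set V)}
    (hW : ∀ K ∈ W, H.IsClique K) {D D' : Set V} (h : Disjoint (closedNbhd H D) D') :
    Disjoint (meeting W D) (meeting W D') := by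
  refine Finset.disjoint_left.mpr fun K hKD hKD' => ?_
  simp only [meeting, Finset.mem_filter] at hKD hKD'
  obtain ⟨b, hbK, hbD⟩ := hKD.2
  obtain ⟨a, haK, haD'⟩ := hKD'.2
  have haD : a ∉ D := fun ha => Set.disjoint_left.mp h (Or.inl ha) haD'
  have hba : H.Adj b a := hW K hKD.1 hbK haK fun hab => haD (hab ▸ hbD)
  exact Set.disjoint_left.mp h (Or.inr ⟨haD, b, hbD, hba⟩) haD'

section Balanced

variable [Finite V] {H : SimpleGraph V}

lemma IsChordal.exists_isMaxClique_ssubset_or_disjoint (hH : IsChordal H) {Ω D : Set V}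
    (hΩ : H.IsClique Ω) (hD : IsCompOf H Ω D) :
    ∃ Ω', IsMaxClique H Ω' ∧
      ∀ D', IsCompOf H Ω' D' → D' ⊂ D ∨ Disjoint (closedNbhd H D) D' := by
  have hSΩ := hD.nbhd_subset
  obtain ⟨x, hxD, hxS⟩ := hH.exists_adj_of_isClique hD.2.2.1 (Set.toFinite _) (hΩ.subset hSΩ)
    (Set.disjoint_left.mpr fun _ hs => hs.1) fun _ ⟨_, u, hu, hus⟩ => ⟨u, hu, hus⟩
  obtain ⟨Ω', hΩ'S, hΩ'⟩ := exists_isMaxClique_superset H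
    ((hΩ.subset hSΩ).insert fun s hs _ => (hxS s hs).symm)
  refine ⟨Ω', hΩ', fun D' hD' => ?_⟩
  have hD'S : Disjoint D' (nbhd H D) :=
    hD'.2.1.mono_right ((Set.subset_insert _ _).trans hΩ'S)
  by_cases hmeet : (D' ∩ D).Nonempty
  · refine Or.inl ⟨hD.isCompOf_nbhd.subset_of_connected hD'.2.2.1 hD'S hmeet, fun hDD' => ?_⟩
    exact Set.disjoint_left.mp hD'.2.1 (hDD' hxD) (hΩ'S (Set.mem_insert _ _))
  · exact Or.inr (Set.disjoint_union_left.mpr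
      ⟨Set.disjoint_left.mpr fun v hvD hvD' => hmeet ⟨v, hvD', hvD⟩, hD'S.symm⟩)

theorem IsChordal.exists_isMaxClique_balanced (hH : IsChordal H) {W : Finset (Set V)}
    (hW : ∀ K ∈ W, H.IsClique K) :
    ∃ Ω, IsMaxClique H Ω ∧ ∀ D, IsCompOf H Ω D → 2 * (meeting W D).card ≤ W.card := by
  by_contra! hheavy
  obtain ⟨Ω₀, -, hΩ₀⟩ := exists_isMaxClique_superset H H.isClique_empty
  obtain ⟨D, ⟨Ω, hΩ, hD, hDheavy⟩, hmin⟩ := (Set.toFinite {D | ∃ Ω, IsMaxClique H Ω ∧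
      IsCompOf H Ω D ∧ W.card < 2 * (meeting W D).card}).exists_minimal
    (let ⟨D₀, hD₀⟩ := hheavy Ω₀ hΩ₀; ⟨D₀, Ω₀, hΩ₀, hD₀⟩)
  obtain ⟨Ω', hΩ', hsplit⟩ := hH.exists_isMaxClique_ssubset_or_disjoint hΩ.1 hD
  obtain ⟨D', hD', hD'heavy⟩ := hheavy Ω' hΩ'
  rcases hsplit D' hD' with hlt | hdisj
  · exact hlt.2 (hmin ⟨Ω', hΩ', hD', hD'heavy⟩ hlt.1)
  · have hunion := Finset.card_union_of_disjoint (disjoint_meeting_of_disjoint_closedNbhd hW hdisj)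
    have hsub : (meeting W D ∪ meeting W D').card ≤ W.card := Finset.card_le_card
      (Finset.union_subset (Finset.filter_subset _ W) (Finset.filter_subset _ W))
    omega

end Balanced

theorem balanced_max_clique_general {V : Type*} [Fintype V] (G : SimpleGraph V)
    (W : Finset (Set V)) (hW : IsECC G W) (H : SimpleGraph V) (hH : IsMinTri G H) :
    ∃ Ω : Set V, IsMaxClique H Ω ∧
      ∀ C : Set V, IsCompOf G Ω C → 2 * (meeting W C).card ≤ W.card := by
  obtain ⟨⟨hchordal, hGH⟩, -⟩ := hH
  obtain ⟨Ω, hΩ, hbalanced⟩ :=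
    hchordal.exists_isMaxClique_balanced fun K hK => (hW.1 K hK).mono hGH
  refine ⟨Ω, hΩ, fun C hC => ?_⟩
  obtain ⟨v, hv⟩ := hC.1
  obtain ⟨D, hD, hvD⟩ := exists_isCompOf_mem H (Set.disjoint_left.mp hC.2.1 hv)
  have hCD : C ⊆ D := hD.subset_of_connected
    (hC.2.2.1.mono fun _ _ h => hGH h) hC.2.1 ⟨v, hv, hvD⟩
  exact (Nat.mul_le_mul_left 2 (Finset.card_le_card (meeting_mono W hCD))).trans
    (hbalanced D hD)

/-- Every minimal triangulation `H` of `G` has a maximal clique `Ω` such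
that every component `C` of `G \ Ω` satisfies `|W[C]| ≤ |W| / 2`. -/
theorem balanced_max_clique {V : Type*} [Fintype V] (G : SimpleGraph V) (hG : G.Connected)
    (W : Finset (Set V)) (hW : IsECC G W) (H : SimpleGraph V) (hH : IsMinTri G H) :
    ∃ Ω : Set V, IsMaxClique H Ω ∧
      ∀ C : Set V, IsCompOf G Ω C → 2 * (meeting W C).card ≤ W.card :=
  balanced_max_clique_general G W hW H hH

end PaperECC
end

section
/- Let G be a finite simple graph, W an edge clique cover of G, and C a block of G. Then every member of W[C] is contained in N[C], and the collection W[C] ∪ {N(C)} is an edge clique cover of the realization R(C); in particular R(C) has an edge clique cover of size at most |W[C]| + 1. -/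
open scoped Classical

namespace PaperECC

variable {V : Type*}

variable {G : SimpleGraph V}

theorem subset_closedNbhd_of_isClique {K X : Set V} (hK : G.IsClique K)
    (hKX : (K ∩ X).Nonempty) : K ⊆ closedNbhd G X := by
  obtain ⟨u, huK, huX⟩ := hKX
  intro v hvK
  by_cases hvX : v ∈ X
  · exact Or.inl hvX
  · have hne : u ≠ v := by rintro rfl; exact hvX huX
    exact Or.inr ⟨hvX, u, huX, hK huK hvK hne⟩

theorem IsECC.subset_closedNbhd {W : Finset (Set V)} (hW : IsECC G W) {X K : Set V}
    (hK : K ∈ meeting W X) : K ⊆ closedNbhd G X := by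
  rw [meeting, Finset.mem_filter] at hK
  exact subset_closedNbhd_of_isClique (hW.1 K hK.1) hK.2

theorem IsECC.exists_mem_meeting {W : Finset (Set V)} (hW : IsECC G W) {X : Set V}
    {u v : V} (huv : G.Adj u v) (hX : u ∈ X ∨ v ∈ X) :
    ∃ K ∈ meeting W X, u ∈ K ∧ v ∈ K := by
  obtain ⟨K, hKW, huK, hvK⟩ := hW.2 u v huv
  refine ⟨K, Finset.mem_filter.mpr ⟨hKW, ?_⟩, huK, hvK⟩
  rcases hX with hu | hv
  exacts [⟨u, huK, hu⟩, ⟨v, hvK, hv⟩]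

theorem isClique_realization_nbhd (C : Set V) : (realization G C).IsClique (nbhd G C) :=
  fun _ hu _ hv hne => ⟨hne, Or.inr hu, Or.inr hv, Or.inr ⟨hu, hv⟩⟩

theorem isClique_realization_of_subset {C K : Set V} (hK : G.IsClique K)
    (hKC : K ⊆ closedNbhd G C) : (realization G C).IsClique K :=
  fun _ hu _ hv hne => ⟨hne, hKC hu, hKC hv, Or.inl (hK hu hv hne)⟩

theorem IsECC.realization {W : Finset (Set V)} (hW : IsECC G W) (C : Set V) :
    IsECC (realization G C) (insert (nbhd G C) (meeting W C)) := by
  refine ⟨fun K hK => ?_, fun u v huv => ?_⟩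
  · rcases Finset.mem_insert.mp hK with rfl | hK
    · exact isClique_realization_nbhd C
    · exact isClique_realization_of_subset (hW.1 K (Finset.mem_filter.mp hK).1)
        (hW.subset_closedNbhd hK)
  · obtain ⟨-, hu, hv, hadj⟩ := huv
    by_cases hC : u ∈ C ∨ v ∈ C
    · have hG : G.Adj u v := hadj.resolve_right fun ⟨hu', hv'⟩ => hC.elim hu'.1 hv'.1
      obtain ⟨K, hK, huK, hvK⟩ := hW.exists_mem_meeting hG hC
      exact ⟨K, Finset.mem_insert_of_mem hK, huK, hvK⟩
    · obtain ⟨huC, hvC⟩ := not_or.mp hC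
      exact ⟨nbhd G C, Finset.mem_insert_self _ _, hu.resolve_left huC, hv.resolve_left hvC⟩

theorem realization_ecc_general {V : Type*} (G : SimpleGraph V)
    (W : Finset (Set V)) (hW : IsECC G W) (C : Set V) :
    (∀ K ∈ meeting W C, K ⊆ closedNbhd G C) ∧
      IsECC (realization G C) (insert (nbhd G C) (meeting W C)) ∧
      (insert (nbhd G C) (meeting W C)).card ≤ (meeting W C).card + 1 :=
  ⟨fun _ => hW.subset_closedNbhd, hW.realization C, Finset.card_insert_le _ _⟩

/-- Every clique of `W[C]` lies inside `N[C]`, and `W[C] ∪ {N(C)}` is an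
edge clique cover of the realization `R(C)` of size at most `|W[C]| + 1`. -/
theorem realization_ecc {V : Type*} [Fintype V] (G : SimpleGraph V)
    (W : Finset (Set V)) (hW : IsECC G W) (C : Set V) (hC : IsBlock G C) :
    (∀ K ∈ meeting W C, K ⊆ closedNbhd G C) ∧
      IsECC (realization G C) (insert (nbhd G C) (meeting W C)) ∧
      (insert (nbhd G C) (meeting W C)).card ≤ (meeting W C).card + 1 :=
  realization_ecc_general G W hW C

end PaperECC
end
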